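/- arXiv:1903.11681 — 2 statements merged into one kernel-verified Lean document; each statement's English description precedes it below -/
import Mathlib

section
/- In the cases F4^(1) and E6^(2), the unique i-sequence is (2,3,4) and the unique j-sequence is (2,3). In the cases E6^(1), E7^(1), E8^(1), any two i-sequences have the same length and can be obtained from one another by finitely many transpositions of adjacent entries i_k, i_{k+1} with c_{i_k i_{k+1}} = 0 (i.e., they lie in the same commutation class), and the same holds for any two j-sequences. -/
/-- The five affine types considered in the paper. -/
inductive AffCase : Type
  | E6 | E7 | E8 | F4 | E62
  deriving DecidableEq

open AffCase

/-- The rank `n` of the underlying finite-type algebra `g_0`. -/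
def rank : AffCase → ℕ
  | E6 => 6 | E7 => 7 | E8 => 8 | F4 => 4 | E62 => 4

/-- Edges of the Dynkin diagram of `g_0`. -/
def adj : AffCase → List (ℕ × ℕ)
  | E6  => [(1,2),(2,3),(2,4),(3,5),(4,6)]
  | E7  => [(1,2),(2,3),(3,4),(3,5),(5,6),(6,7)]
  | E8  => [(1,2),(2,3),(3,4),(4,5),(5,6),(5,7),(7,8)]
  | F4  => [(1,2),(2,3),(3,4)]
  | E62 => [(1,2),(2,3),(3,4)]

/-- The Cartan matrix `c_{ij}` of `g_0`. -/
def cartan (c : AffCase) (i j : ℕ) : ℤ :=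
  if i = j then 2
  else if (i, j) ∈ adj c ∨ (j, i) ∈ adj c then
    if (c = F4 ∧ i = 3 ∧ j = 2) ∨ (c = E62 ∧ i = 2 ∧ j = 3) then -2 else -1
  else 0

/-- The index set `I_0 = {1,…,n}`. -/
def I0 (c : AffCase) : Finset ℕ := Finset.Icc 1 (rank c)

/-- The index set `I_{01} = I_0 \ {1} = {2,…,n}`. -/
def I01 (c : AffCase) : Finset ℕ := Finset.Icc 2 (rank c)

/-- The constant `c` : `2` in case `F4^(1)`, `1` otherwise. -/
def cconst : AffCase → ℤ
  | F4 => 2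
  | _ => 1

/-- The pairing `⟨h_i, v⟩ = Σ_j c_{ij} v_j`. -/
def pairing (c : AffCase) (i : ℕ) (v : ℕ → ℤ) : ℤ :=
  ∑ j ∈ I0 c, cartan c i j * v j

/-- The standard basis vector `e_i` of the root lattice. -/
def stdb (i : ℕ) : ℕ → ℤ := fun j => if j = i then 1 else 0

/-- The simple reflection `σ_i(v) = v − ⟨h_i, v⟩ e_i`. -/
def sref (c : AffCase) (i : ℕ) (v : ℕ → ℤ) : ℕ → ℤ :=
  fun j => v j - if j = i then pairing c i v else 0

/-- `srefs c f k v = σ_{f k} ⋯ σ_{f 1} (v)` (note: `f 0` is not applied). -/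
def srefs (c : AffCase) (f : ℕ → ℕ) : ℕ → (ℕ → ℤ) → (ℕ → ℤ)
  | 0, v => v
  | k+1, v => sref c (f (k+1)) (srefs c f k v)

/-- The root `θ_1`. -/
def theta1 (c : AffCase) : ℕ → ℤ := fun j =>
  (match c with
    | E6  => ([0,0,1,1,1,1,1] : List ℤ)
    | E7  => ([0,0,1,2,1,2,2,1] : List ℤ)
    | E8  => ([0,0,1,2,3,4,2,3,2] : List ℤ)
    | F4  => ([0,0,1,2,2] : List ℤ)
    | E62 => ([0,0,1,1,1] : List ℤ)).getD j 0

/-- The subset `J ⊆ I_0`. -/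
def Jset : AffCase → Finset ℕ
  | E6  => {2,3,4}
  | E7  => {2,3,4,5}
  | E8  => {2,3,4,5,6,7}
  | F4  => {2,3}
  | E62 => {2,3}

/-- The root `θ_J`. -/
def thetaJ (c : AffCase) : ℕ → ℤ := fun j =>
  (match c with
    | E6  => ([0,0,1,1,1,0,0] : List ℤ)
    | E7  => ([0,0,1,2,1,1,0,0] : List ℤ)
    | E8  => ([0,0,1,2,2,2,1,1,0] : List ℤ)
    | F4  => ([0,0,1,2,0] : List ℤ)
    | E62 => ([0,0,1,1,0] : List ℤ)).getD j 0

/-- `(L, f)` encodes an i-sequence `(i_0, …, i_L) = (f 0, …, f L)`. -/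
def IsISeq (c : AffCase) (L : ℕ) (f : ℕ → ℕ) : Prop :=
  (∀ k ≤ L, f k ∈ I01 c) ∧ f 0 = 2 ∧
  (∀ k, 1 ≤ k → k ≤ L →
    pairing c (f k) (srefs c f (k-1) (stdb 2)) = -(cconst c)) ∧
  srefs c f L (stdb 2) = theta1 c

/-- `(L, f)` encodes a j-sequence `(j_0, …, j_L) = (f 0, …, f L)`. -/
def IsJSeq (c : AffCase) (L : ℕ) (f : ℕ → ℕ) : Prop :=
  (∀ k ≤ L, f k ∈ Jset c) ∧ f 0 = 2 ∧
  (∀ k, 1 ≤ k → k ≤ L →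
    pairing c (f k) (srefs c f (k-1) (stdb 2)) = -(cconst c)) ∧
  srefs c f L (stdb 2) = thetaJ c

/-- The list `[i_0, i_1, …, i_L]` is an i-sequence. -/
def IsISeqL (c : AffCase) (l : List ℕ) : Prop :=
  ∃ L : ℕ, l.length = L + 1 ∧ IsISeq c L (fun k => l.getD k 0)

/-- The list `[j_0, j_1, …, j_{L'}]` is a j-sequence. -/
def IsJSeqL (c : AffCase) (l : List ℕ) : Prop :=
  ∃ L : ℕ, l.length = L + 1 ∧ IsJSeq c L (fun k => l.getD k 0)

/-- One transposition of two adjacent commuting entries (`c_{ab} = 0`). -/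
def CommStep (c : AffCase) (l l' : List ℕ) : Prop :=
  ∃ (u v : List ℕ) (a b : ℕ), cartan c a b = 0 ∧
    l = u ++ a :: b :: v ∧ l' = u ++ b :: a :: v

/-! Each step `σ_{i_k}` of a sequence adds `c • α_{i_k}`, so `σ_{i_k} ⋯ σ_{i_1}(α_2)` has
height `1 + c k`: the length of a sequence is fixed by the height of its target, and the
sequences of that length are the leaves of a finite tree that can be enumerated. For `F4^(1)`
and `E6^(2)` the enumeration has a single leaf. For `E6^(1)`, `E7^(1)`, `E8^(1)` every leaf but
the lexicographically least one has a smaller neighbour under one commutation, so descending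
lexicographically connects all of them. -/

open Relation

section CartanData

variable {c : AffCase}

theorem two_le_rank (c : AffCase) : 2 ≤ rank c := by
  cases c <;> decide

theorem cconst_pos (c : AffCase) : 0 < cconst c := by
  cases c <;> decide

theorem I01_subset_I0 (c : AffCase) : I01 c ⊆ I0 c :=
  Finset.Icc_subset_Icc_left one_le_two

theorem Jset_subset_I01 (c : AffCase) : Jset c ⊆ I01 c := by
  cases c <;> decide

theorem two_mem_I0 (c : AffCase) : 2 ∈ I0 c :=
  Finset.mem_Icc.2 ⟨one_le_two, two_le_rank c⟩

theorem eq_zero_or_rank_lt_of_notMem_I0 {j : ℕ} (hj : j ∉ I0 c) : j = 0 ∨ rank c < j := by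
  simp only [I0, Finset.mem_Icc, not_and, not_le] at hj
  omega

theorem theta1_eq_zero_of_notMem_I0 {j : ℕ} (hj : j ∉ I0 c) : theta1 c j = 0 := by
  rcases eq_zero_or_rank_lt_of_notMem_I0 hj with rfl | hj
  · cases c <;> rfl
  · cases c <;> exact List.getD_eq_default _ _ (by simp only [rank] at hj; simp; omega)

theorem thetaJ_eq_zero_of_notMem_I0 {j : ℕ} (hj : j ∉ I0 c) : thetaJ c j = 0 := by
  rcases eq_zero_or_rank_lt_of_notMem_I0 hj with rfl | hj
  · cases c <;> rfl
  · cases c <;> exact List.getD_eq_default _ _ (by simp only [rank] at hj; simp; omega)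

theorem cartan_comm_eq_zero {a b : ℕ} (h : cartan c a b = 0) : cartan c b a = 0 := by
  unfold cartan at h ⊢
  split_ifs at h ⊢ <;> simp_all [eq_comm, or_comm]

end CartanData

section CommutationClasses

variable {c : AffCase}

theorem CommStep.symm {l l' : List ℕ} (h : CommStep c l l') : CommStep c l' l :=
  let ⟨u, v, a, b, hab, hl, hl'⟩ := h
  ⟨u, v, b, a, cartan_comm_eq_zero hab, hl', hl⟩

instance : Std.Symm (CommStep c) := ⟨fun _ _ => CommStep.symm⟩

def swaps (c : AffCase) : List ℕ → List (List ℕ)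
  | a :: b :: t =>
      (if cartan c a b = 0 then [b :: a :: t] else []) ++ (swaps c (b :: t)).map (a :: ·)
  | _ => []

theorem commStep_of_mem_swaps : ∀ {l l' : List ℕ}, l' ∈ swaps c l → CommStep c l l'
  | a :: b :: t, l', h => by
    rcases List.mem_append.1 h with h | h
    · split_ifs at h with hab
      · exact ⟨[], t, a, b, hab, rfl, List.mem_singleton.1 h⟩
      · simp at h
    · obtain ⟨m, hm, rfl⟩ := List.mem_map.1 h
      obtain ⟨u, v, x, y, hxy, hl, hm'⟩ := commStep_of_mem_swaps hm
      exact ⟨a :: u, v, x, y, hxy, by rw [hl]; rfl, by rw [hm']; rfl⟩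

def HasCommDescent (c : AffCase) (T : List (List ℕ)) : Prop :=
  ∀ x ∈ T, x ≠ T.headI → ∃ y ∈ swaps c x, y ∈ T ∧ y < x

instance (T : List (List ℕ)) : Decidable (HasCommDescent c T) := by
  unfold HasCommDescent; infer_instance

theorem HasCommDescent.reflTransGen_headI {T : List (List ℕ)} (hT : HasCommDescent c T)
    {x : List ℕ} (hx : x ∈ T) : ReflTransGen (CommStep c) x T.headI := by
  refine T.finite_toSet.wellFoundedOn.induction (r := (· < ·)) hx
    (P := fun x => ReflTransGen (CommStep c) x T.headI) fun y hy ih => ?_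
  by_cases hy₀ : y = T.headI
  · rw [hy₀]
  · obtain ⟨z, hz, hzT, hzy⟩ := hT y hy hy₀
    exact .head (commStep_of_mem_swaps hz) (ih z hzT hzy)

theorem HasCommDescent.reflTransGen {T : List (List ℕ)} (hT : HasCommDescent c T)
    {x y : List ℕ} (hx : x ∈ T) (hy : y ∈ T) : ReflTransGen (CommStep c) x y :=
  (hT.reflTransGen_headI hx).trans (Std.Symm.symm _ _ (hT.reflTransGen_headI hy))

theorem length_eq_and_reflTransGen_of_hasCommDescent {P : List ℕ → Prop}
    {T : List (List ℕ)} {n : ℕ} (hP : ∀ l, P l → l.length = n ∧ l ∈ T)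
    (hT : HasCommDescent c T) {l l' : List ℕ} (hl : P l) (hl' : P l') :
    l.length = l'.length ∧ ReflTransGen (CommStep c) l l' :=
  ⟨(hP l hl).1.trans (hP l' hl').1.symm, hT.reflTransGen (hP l hl).2 (hP l' hl').2⟩

end CommutationClasses

section Enumeration

variable {c : AffCase}

theorem sref_eq_update {i : ℕ} {v : ℕ → ℤ} (h : pairing c i v = -cconst c) :
    sref c i v = Function.update v i (v i + cconst c) := by
  funext j
  by_cases hj : j = i
  · subst hj; simp [sref, h]
  · simp [sref, hj]

theorem srefs_apply_of_notMem_I0 {f : ℕ → ℕ} {v : ℕ → ℤ} {j : ℕ} (hj : j ∉ I0 c) :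
    ∀ {L : ℕ}, (∀ k ≤ L, f k ∈ I0 c) → srefs c f L v j = v j
  | 0, _ => rfl
  | L + 1, hf => by
    have hne : j ≠ f (L + 1) := fun h => hj (h ▸ hf (L + 1) le_rfl)
    simp only [srefs, sref, if_neg hne, sub_zero]
    exact srefs_apply_of_notMem_I0 hj fun k hk => hf k (by omega)

theorem srefs_stdb_eq_of_eqOn_I0 {f : ℕ → ℕ} {L : ℕ} {θ : ℕ → ℤ}
    (hf : ∀ k ≤ L, f k ∈ I0 c) (hθ : ∀ j ∉ I0 c, θ j = 0)
    (h : ∀ j ∈ I0 c, srefs c f L (stdb 2) j = θ j) :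
    srefs c f L (stdb 2) = θ := by
  funext j
  by_cases hj : j ∈ I0 c
  · exact h j hj
  · rw [srefs_apply_of_notMem_I0 hj hf, hθ j hj, stdb, if_neg]
    rintro rfl
    exact hj (two_mem_I0 c)

theorem sum_srefs_stdb {f : ℕ → ℕ} :
    ∀ {L : ℕ}, (∀ k ≤ L, f k ∈ I0 c) →
      (∀ k, 1 ≤ k → k ≤ L → pairing c (f k) (srefs c f (k - 1) (stdb 2)) = -cconst c) →
      ∑ j ∈ I0 c, srefs c f L (stdb 2) j = 1 + cconst c * L
  | 0, _, _ => by simp [srefs, stdb, two_mem_I0]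
  | L + 1, hf, hp => by
    have hi := hf (L + 1) le_rfl
    have hpL : pairing c (f (L + 1)) (srefs c f L (stdb 2)) = -cconst c :=
      hp (L + 1) (by omega) le_rfl
    have ih := sum_srefs_stdb (L := L) (fun k hk => hf k (by omega))
      fun k h1 h2 => hp k h1 (by omega)
    rw [Finset.sum_eq_add_sum_sdiff_singleton_of_mem hi] at ih
    rw [srefs, sref_eq_update hpL, Finset.sum_update_of_mem hi]
    push_cast
    linarith

def admissiblePaths (c : AffCase) : ℕ → List (List ℕ × (ℕ → ℤ))
  | 0 => [([2], stdb 2)]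
  | L + 1 => (admissiblePaths c L).flatMap fun p =>
      ((List.range' 2 (rank c - 1)).filter fun i => pairing c i p.2 = -cconst c).map
        -- `Function.update` rather than `sref` (equal by `sref_eq_update`), so that evaluating
        -- a coordinate does not recompute the pairings of all earlier steps
        fun i => (p.1 ++ [i], Function.update p.2 i (p.2 i + cconst c))

def pathsTo (c : AffCase) (θ : ℕ → ℤ) (L : ℕ) : List (List ℕ) :=
  ((admissiblePaths c L).filter fun p => ∀ j ∈ I0 c, p.2 j = θ j).map Prod.fst

theorem mem_admissiblePaths {f : ℕ → ℕ} (h0 : f 0 = 2) :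
    ∀ {L : ℕ}, (∀ k ≤ L, f k ∈ I01 c) →
      (∀ k, 1 ≤ k → k ≤ L → pairing c (f k) (srefs c f (k - 1) (stdb 2)) = -cconst c) →
      ((List.range (L + 1)).map f, srefs c f L (stdb 2)) ∈ admissiblePaths c L
  | 0, _, _ => by simp [admissiblePaths, srefs, h0]
  | L + 1, hf, hp => by
    have hpL : pairing c (f (L + 1)) (srefs c f L (stdb 2)) = -cconst c :=
      hp (L + 1) (by omega) le_rfl
    have hletter : f (L + 1) ∈ List.range' 2 (rank c - 1) := by
      have := Finset.mem_Icc.1 (hf (L + 1) le_rfl)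
      have := two_le_rank c
      rw [List.mem_range'_1]; simp only [rank, I01] at *; omega
    refine List.mem_flatMap.2 ⟨_, mem_admissiblePaths (L := L) h0 (fun k hk => hf k (by omega))
      fun k h1 h2 => hp k h1 (by omega), List.mem_map.2 ⟨f (L + 1), ?_, ?_⟩⟩
    · exact List.mem_filter.2 ⟨hletter, decide_eq_true hpL⟩
    · rw [List.range_succ (n := L + 1), List.map_append, srefs, sref_eq_update hpL]
      rfl

theorem List.map_range_length_getD {α : Type*} (l : List α) (d : α) :
    (List.range l.length).map (l.getD · d) = l :=
  List.ext_getElem (by simp) fun k _ hk => by simp [hk]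

theorem length_eq_and_mem_pathsTo {S : Finset ℕ} {θ : ℕ → ℤ} {L₀ L : ℕ} {l : List ℕ}
    (hS : S ⊆ I01 c) (hθ : ∑ j ∈ I0 c, θ j = 1 + cconst c * L₀) (hlen : l.length = L + 1)
    (hl : (∀ k ≤ L, l.getD k 0 ∈ S) ∧ l.getD 0 0 = 2 ∧
      (∀ k, 1 ≤ k → k ≤ L →
        pairing c (l.getD k 0) (srefs c (l.getD · 0) (k - 1) (stdb 2)) = -cconst c) ∧
      srefs c (l.getD · 0) L (stdb 2) = θ) :
    l.length = L₀ + 1 ∧ l ∈ pathsTo c θ L₀ := by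
  obtain ⟨hletters, h0, hp, hend⟩ := hl
  have hI01 : ∀ k ≤ L, l.getD k 0 ∈ I01 c := fun k hk => hS (hletters k hk)
  have hL : L = L₀ := by
    have := sum_srefs_stdb (fun k hk => I01_subset_I0 c (hI01 k hk)) hp
    rw [hend, hθ, add_right_inj] at this
    exact_mod_cast (mul_left_cancel₀ (cconst_pos c).ne' this).symm
  subst hL
  have hmem := mem_admissiblePaths (f := (l.getD · 0)) h0 hI01 hp
  refine ⟨hlen, List.mem_map.2 ⟨_, List.mem_filter.2 ⟨hmem, ?_⟩, ?_⟩⟩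
  · exact decide_eq_true fun j _ => congrFun hend j
  · rw [← hlen, List.map_range_length_getD]

theorem IsISeqL.length_eq_and_mem_pathsTo {l : List ℕ} {L₀ : ℕ} (hl : IsISeqL c l)
    (hθ : ∑ j ∈ I0 c, theta1 c j = 1 + cconst c * L₀) :
    l.length = L₀ + 1 ∧ l ∈ pathsTo c (theta1 c) L₀ :=
  let ⟨_, hlen, hseq⟩ := hl
  _root_.length_eq_and_mem_pathsTo subset_rfl hθ hlen hseq

theorem IsJSeqL.length_eq_and_mem_pathsTo {l : List ℕ} {L₀ : ℕ} (hl : IsJSeqL c l)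
    (hθ : ∑ j ∈ I0 c, thetaJ c j = 1 + cconst c * L₀) :
    l.length = L₀ + 1 ∧ l ∈ pathsTo c (thetaJ c) L₀ :=
  let ⟨_, hlen, hseq⟩ := hl
  _root_.length_eq_and_mem_pathsTo (Jset_subset_I01 c) hθ hlen hseq

end Enumeration

section Existence

variable {c : AffCase}

theorem isISeqL_two_three_four (hc : c = F4 ∨ c = E62) : IsISeqL c [2, 3, 4] := by
  rcases hc with rfl | rfl <;>
    exact ⟨2, rfl, by decide, rfl, by decide,
      srefs_stdb_eq_of_eqOn_I0 (by decide) (fun _ => theta1_eq_zero_of_notMem_I0) (by decide)⟩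

theorem isJSeqL_two_three (hc : c = F4 ∨ c = E62) : IsJSeqL c [2, 3] := by
  rcases hc with rfl | rfl <;>
    exact ⟨1, rfl, by decide, rfl, by decide,
      srefs_stdb_eq_of_eqOn_I0 (by decide) (fun _ => thetaJ_eq_zero_of_notMem_I0) (by decide)⟩

end Existence

theorem stmt6 :
    (∀ c : AffCase, (c = AffCase.F4 ∨ c = AffCase.E62) →
      (IsISeqL c [2,3,4] ∧ ∀ l, IsISeqL c l → l = [2,3,4]) ∧
      (IsJSeqL c [2,3] ∧ ∀ l, IsJSeqL c l → l = [2,3])) ∧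
    (∀ c : AffCase, (c = AffCase.E6 ∨ c = AffCase.E7 ∨ c = AffCase.E8) →
      (∀ l l', IsISeqL c l → IsISeqL c l' →
        l.length = l'.length ∧ Relation.ReflTransGen (CommStep c) l l') ∧
      (∀ l l', IsJSeqL c l → IsJSeqL c l' →
        l.length = l'.length ∧ Relation.ReflTransGen (CommStep c) l l')) := by
  refine ⟨fun c hc => ?_, fun c hc => ?_⟩
  · obtain ⟨hθI, hθJ, hI, hJ⟩ :
        ∑ j ∈ I0 c, theta1 c j = 1 + cconst c * (2 : ℕ) ∧
        ∑ j ∈ I0 c, thetaJ c j = 1 + cconst c * (1 : ℕ) ∧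
        pathsTo c (theta1 c) 2 = [[2, 3, 4]] ∧ pathsTo c (thetaJ c) 1 = [[2, 3]] := by
      rcases hc with rfl | rfl <;> decide
    refine ⟨⟨isISeqL_two_three_four hc, fun l hl => ?_⟩,
      ⟨isJSeqL_two_three hc, fun l hl => ?_⟩⟩
    · simpa [hI] using (hl.length_eq_and_mem_pathsTo hθI).2
    · simpa [hJ] using (hl.length_eq_and_mem_pathsTo hθJ).2
  · obtain ⟨LI, LJ, hθI, hθJ, hI, hJ⟩ : ∃ LI LJ : ℕ,
        ∑ j ∈ I0 c, theta1 c j = 1 + cconst c * LI ∧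
        ∑ j ∈ I0 c, thetaJ c j = 1 + cconst c * LJ ∧
        HasCommDescent c (pathsTo c (theta1 c) LI) ∧
        HasCommDescent c (pathsTo c (thetaJ c) LJ) := by
      rcases hc with rfl | rfl | rfl
      exacts [⟨4, 2, by decide, by decide, by decide, by decide⟩,
        ⟨8, 4, by decide, by decide, by decide, by decide⟩,
        ⟨16, 8, by decide, by decide, by decide, by decide⟩]
    exact ⟨fun l l' => length_eq_and_reflTransGen_of_hasCommDescent
        (fun l hl => hl.length_eq_and_mem_pathsTo hθI) hI,
      fun l l' => length_eq_and_reflTransGen_of_hasCommDescent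
        (fun l hl => hl.length_eq_and_mem_pathsTo hθJ) hJ⟩
end

section
/- For every positive integer ℓ and every r = (r_1,…,r_5) ∈ T_ℓ, the fiber φ^{−1}(r) ∩ S_ℓ equals the set { r_0 + k·(1,1,1,1,1,0) : k ∈ Z, r_1 ≤ k ≤ r_1 + r_2 − r_4 − 2r_5 }, where r_0 = (r_1+r_2+r_3+r_4+r_5, r_3+r_4+r_5, r_4+r_5, r_5, 0, r_1) ∈ Z^6. In particular, the fiber has exactly 1 + r_2 − r_4 − 2r_5 elements. -/
/-- The set `S_ℓ ⊆ Z_{≥0}^6` (coordinates `p 0, …, p 5` are `p_1, …, p_6`). -/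
def Sset (ℓ : ℤ) : Set (Fin 6 → ℤ) :=
  {p | (∀ i, 0 ≤ p i) ∧ p 5 ≤ p 4 ∧ p 4 ≤ p 3 ∧ p 3 ≤ p 2 ∧ p 2 ≤ p 1 ∧
       p 1 + p 2 + p 3 - p 4 ≤ p 0 ∧ p 0 ≤ p 3 + ℓ}

/-- The set `T_ℓ ⊆ Z_{≥0}^5` (coordinates `r 0, …, r 4` are `r_1, …, r_5`). -/
def Tset (ℓ : ℤ) : Set (Fin 5 → ℤ) :=
  {r | (∀ i, 0 ≤ r i) ∧ r 0 + r 1 + r 2 + r 3 ≤ ℓ ∧ r 3 + 2 * r 4 ≤ r 1}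

/-- The map `φ(p_1,…,p_6) = (p_6, p_1−p_2−p_6, p_2−p_3, p_3−p_4, p_4−p_5)`. -/
def phi (p : Fin 6 → ℤ) : Fin 5 → ℤ :=
  ![p 5, p 0 - p 1 - p 5, p 1 - p 2, p 2 - p 3, p 3 - p 4]

/-- Coordinates of `wt(p)` in the basis `(ϖ_1, ϖ_2, γ_1, γ_2)`. -/
def wtc (p : Fin 6 → ℤ) : Fin 4 → ℤ :=
  ![p 0 - p 1 - p 2 - p 3 + 2 * p 4 - p 5, -p 0 + 2 * p 3 - p 4, p 1 - p 2, p 2 - p 3]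

/-- Coordinates of `wt_T(r)` in the basis `(ϖ_1, ϖ_2, γ_1, γ_2)`. -/
def wtcT (r : Fin 5 → ℤ) : Fin 4 → ℤ :=
  ![r 1 - r 3 - 2 * r 4, -r 0 - r 1 - r 2 - r 3 + r 4, r 2, r 3]


private lemma vec6_five {α : Type*} (a b c d e f : α) : ![a,b,c,d,e,f] (5 : Fin 6) = f := rfl
private lemma vec6_four {α : Type*} (a b c d e f : α) : ![a,b,c,d,e,f] (4 : Fin 6) = e := rfl

theorem stmt11 (ℓ : ℤ) (hℓ : 0 < ℓ) (r : Fin 5 → ℤ) (hr : r ∈ Tset ℓ) :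
    ({p : Fin 6 → ℤ | phi p = r ∧ p ∈ Sset ℓ} =
      {p : Fin 6 → ℤ | ∃ k : ℤ, r 0 ≤ k ∧ k ≤ r 0 + r 1 - r 3 - 2 * r 4 ∧
        p = (![r 0 + r 1 + r 2 + r 3 + r 4, r 2 + r 3 + r 4, r 3 + r 4, r 4, 0, r 0]
              : Fin 6 → ℤ)
            + k • (![1,1,1,1,1,0] : Fin 6 → ℤ)}) ∧
    ({p : Fin 6 → ℤ | phi p = r ∧ p ∈ Sset ℓ}).ncard
      = (1 + r 1 - r 3 - 2 * r 4).toNat := by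
  obtain ⟨hnn, hsum, hineq⟩ := hr
  have h03 : r 3 + 2 * r 4 ≤ r 1 := hineq
  have heq : {p : Fin 6 → ℤ | phi p = r ∧ p ∈ Sset ℓ} =
      {p : Fin 6 → ℤ | ∃ k : ℤ, r 0 ≤ k ∧ k ≤ r 0 + r 1 - r 3 - 2 * r 4 ∧
        p = (![r 0 + r 1 + r 2 + r 3 + r 4, r 2 + r 3 + r 4, r 3 + r 4, r 4, 0, r 0]
              : Fin 6 → ℤ)
            + k • (![1,1,1,1,1,0] : Fin 6 → ℤ)} := by
    ext p
    simp only [Set.mem_setOf_eq]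
    constructor
    · rintro ⟨hphi, hpos, h54, h43, h32, h21, hlo, hhi⟩
      have e0 := congrFun hphi 0
      have e1 := congrFun hphi 1
      have e2 := congrFun hphi 2
      have e3 := congrFun hphi 3
      have e4 := congrFun hphi 4
      simp only [phi, Matrix.cons_val_zero, Matrix.cons_val_one, Matrix.head_cons,
        Matrix.cons_val_two, Matrix.tail_cons, Matrix.cons_val_three,
        Matrix.cons_val_four, Matrix.cons_val_succ] at e0 e1 e2 e3 e4
      refine ⟨p 4, by linarith, by linarith, ?_⟩
      funext i
      fin_cases i <;>
        simp [vec6_five, vec6_four] <;> linarith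
    · rintro ⟨k, hk1, hk2, rfl⟩
      refine ⟨?_, ?_⟩
      · funext i
        fin_cases i <;>
          simp [phi, vec6_five, vec6_four] <;> ring
      · have h0 := hnn 0; have h1 := hnn 1; have h2 := hnn 2; have h3 := hnn 3
        have h4 := hnn 4
        refine ⟨fun i => ?_, ?_, ?_, ?_, ?_, ?_, ?_⟩ <;>
        · try fin_cases i
          all_goals
            simp [vec6_five, vec6_four]
          all_goals linarith
  refine ⟨heq, ?_⟩
  rw [heq]
  have himg : {p : Fin 6 → ℤ | ∃ k : ℤ, r 0 ≤ k ∧ k ≤ r 0 + r 1 - r 3 - 2 * r 4 ∧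
        p = (![r 0 + r 1 + r 2 + r 3 + r 4, r 2 + r 3 + r 4, r 3 + r 4, r 4, 0, r 0]
              : Fin 6 → ℤ)
            + k • (![1,1,1,1,1,0] : Fin 6 → ℤ)} =
      (fun k : ℤ => (![r 0 + r 1 + r 2 + r 3 + r 4, r 2 + r 3 + r 4, r 3 + r 4, r 4, 0, r 0]
              : Fin 6 → ℤ) + k • (![1,1,1,1,1,0] : Fin 6 → ℤ)) ''
        Set.Icc (r 0) (r 0 + r 1 - r 3 - 2 * r 4) := by
    ext p
    simp only [Set.mem_setOf_eq, Set.mem_image, Set.mem_Icc]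
    constructor
    · rintro ⟨k, h1, h2, rfl⟩; exact ⟨k, ⟨h1, h2⟩, rfl⟩
    · rintro ⟨k, ⟨h1, h2⟩, rfl⟩; exact ⟨k, h1, h2, rfl⟩
  rw [himg, Set.ncard_image_of_injective _ ?inj]
  case inj =>
    intro a b hab
    have := congrFun hab 4
    simpa using this
  rw [← Finset.coe_Icc, Set.ncard_coe_finset, Int.card_Icc]
  congr 1
  omega
end
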